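/- Fix t* > 0 and a natural number n ≥ 1. There exists a constant C ≥ 0, independent of ω, such that for all real ω ≥ 1 and all t ∈ [0,t*]: ‖(iω)^{−n}·∫₀ᵗ e^{iωτ}·exp((t−τ)·L)·ad_L^n(α)·exp(τ·L)·u₀ dτ‖ ≤ C·ω^{−(n+1)}. -/

import Mathlib

/-- Iterated commutator: `adL L 0 x = x`, `adL L (k+1) x = L * adL L k x - adL L k x * L`. -/
def adL {A : Type*} [Ring A] (L : A) : ℕ → A → A
  | 0, x => x
  | k+1, x => L * adL L k x - adL L k x * L

/-!
Integrate by parts against `e^{iωτ} = d/dτ (e^{iωτ} / (iω))`: this gains a factor `1/ω`, the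
boundary terms are bounded uniformly in `t ∈ [0, T]`, and the derivative of
`τ ↦ exp((t-τ)L) a exp(τL)` is `-exp((t-τ)L) [L, a] exp(τL)`, which is again of the same shape
with `a = ad_L^n(α)` replaced by `ad_L^{n+1}(α)`. The norms of `exp(sL)` for `s ∈ [0, T]` are
bounded by compactness.
-/

section Oscillatory

open Complex MeasureTheory Set intervalIntegral

theorem hasDerivAt_cexp_I_mul_div {ω : ℝ} (hω : ω ≠ 0) (x : ℝ) :
    HasDerivAt (fun y : ℝ => cexp (I * ω * y) / (I * ω)) (cexp (I * ω * x)) x := by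
  have hIω : I * (ω : ℂ) ≠ 0 := mul_ne_zero I_ne_zero (ofReal_ne_zero.2 hω)
  have h := ((hasDerivAt_id (x : ℂ)).const_mul (I * ω)).cexp.comp_ofReal.div_const (I * ω)
  simpa [hIω] using h

theorem norm_integral_cexp_smul_le {E : Type*} [NormedAddCommGroup E] [NormedSpace ℂ E]
    [CompleteSpace E] {f f' : ℝ → E} {a b ω M M' : ℝ} (hω : ω ≠ 0) (hab : a ≤ b)
    (hf : ∀ x ∈ Icc a b, HasDerivAt f (f' x) x) (hf' : IntervalIntegrable f' volume a b)
    (hM : ∀ x ∈ Icc a b, ‖f x‖ ≤ M) (hM' : ∀ x ∈ Icc a b, ‖f' x‖ ≤ M') :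
    ‖∫ x in a..b, cexp (I * ω * x) • f x‖ ≤ (2 * M + (b - a) * M') / |ω| := by
  set u : ℝ → ℂ := fun x => cexp (I * ω * x) / (I * ω)
  have hu : ∀ x, ‖u x‖ = |ω|⁻¹ := fun x => by
    simp [u, norm_exp_I_mul_ofReal, ← ofReal_mul, mul_assoc]
  have hcexp : Continuous fun x : ℝ => cexp (I * ω * x) := by fun_prop
  have hparts := integral_smul_deriv_eq_deriv_smul (u := u) (v := f)
    (fun x _ => hasDerivAt_cexp_I_mul_div hω x) (by rwa [uIcc_of_le hab])
    (hcexp.intervalIntegrable a b) hf'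
  have hrem : ‖∫ x in a..b, u x • f' x‖ ≤ |ω|⁻¹ * M' * (b - a) := by
    have h := norm_integral_le_of_norm_le_const (a := a) (b := b) (C := |ω|⁻¹ * M')
      (f := fun x => u x • f' x) fun x hx => by
        rw [uIoc_of_le hab] at hx
        rw [norm_smul, hu]
        exact mul_le_mul_of_nonneg_left (hM' x (Ioc_subset_Icc_self hx)) (by positivity)
    rwa [abs_of_nonneg (sub_nonneg.2 hab)] at h
  have hend : ∀ x ∈ Icc a b, ‖u x • f x‖ ≤ |ω|⁻¹ * M := fun x hx => by
    rw [norm_smul, hu]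
    exact mul_le_mul_of_nonneg_left (hM x hx) (by positivity)
  rw [show ∫ x in a..b, cexp (I * ω * x) • f x
      = u b • f b - u a • f a - ∫ x in a..b, u x • f' x by rw [hparts]; abel]
  calc _ ≤ ‖u b • f b‖ + ‖u a • f a‖ + ‖∫ x in a..b, u x • f' x‖ :=
        (norm_sub_le _ _).trans (add_le_add_left (norm_sub_le _ _) _)
    _ ≤ |ω|⁻¹ * M + |ω|⁻¹ * M + |ω|⁻¹ * M' * (b - a) := by
        gcongr
        exacts [hend b (right_mem_Icc.2 hab), hend a (left_mem_Icc.2 hab)]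
    _ = (2 * M + (b - a) * M') / |ω| := by ring

end Oscillatory

section ExpFlow

open NormedSpace Set

variable {A : Type*} [NormedRing A] [NormedAlgebra ℂ A]

theorem norm_exp_sub_smul_mul_mul_exp_smul_mul_le {L : A} {T M t τ : ℝ} (hM₀ : 0 ≤ M)
    (hM : ∀ s ∈ Icc 0 T, ‖exp ((s : ℂ) • L)‖ ≤ M) (htT : t ≤ T) (hτ : τ ∈ Icc 0 t)
    (a u₀ : A) :
    ‖exp (((t - τ : ℝ) : ℂ) • L) * a * exp ((τ : ℂ) • L) * u₀‖ ≤ M * ‖a‖ * M * ‖u₀‖ := by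
  have hleft := hM (t - τ) ⟨sub_nonneg.2 hτ.2, by linarith [hτ.1]⟩
  have hright := hM τ ⟨hτ.1, hτ.2.trans htT⟩
  calc _ ≤ ‖exp (((t - τ : ℝ) : ℂ) • L)‖ * ‖a‖ * ‖exp ((τ : ℂ) • L)‖ * ‖u₀‖ := by
        refine (norm_mul_le _ _).trans ?_
        gcongr
        refine (norm_mul_le _ _).trans ?_
        gcongr
        exact norm_mul_le _ _
    _ ≤ M * ‖a‖ * M * ‖u₀‖ := by gcongr

variable [CompleteSpace A]

theorem hasDerivAt_exp_ofReal_smul (L : A) (s : ℝ) :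
    HasDerivAt (fun r : ℝ => exp ((r : ℂ) • L)) (exp ((s : ℂ) • L) * L) s := by
  simpa [Function.comp_def] using
    (hasDerivAt_exp_smul_const L (s : ℂ)).scomp s (hasDerivAt_id s).ofReal_comp

theorem continuous_exp_ofReal_smul (L : A) : Continuous fun r : ℝ => exp ((r : ℂ) • L) :=
  continuous_iff_continuousAt.2 fun s => (hasDerivAt_exp_ofReal_smul L s).continuousAt

theorem hasDerivAt_exp_sub_smul_mul_mul_exp_smul (L a : A) (t τ : ℝ) :
    HasDerivAt (fun r : ℝ => exp (((t - r : ℝ) : ℂ) • L) * a * exp ((r : ℂ) • L))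
      (-(exp (((t - τ : ℝ) : ℂ) • L) * (L * a - a * L) * exp ((τ : ℂ) • L))) τ := by
  have hleft : HasDerivAt (fun r : ℝ => exp (((t - r : ℝ) : ℂ) • L))
      (-(exp (((t - τ : ℝ) : ℂ) • L) * L)) τ := by
    simpa only [Function.comp_def, neg_smul, one_smul] using
      (hasDerivAt_exp_ofReal_smul L (t - τ)).scomp τ ((hasDerivAt_id τ).const_sub t)
  have hcomm : exp ((τ : ℂ) • L) * L = L * exp ((τ : ℂ) • L) :=
    (((Commute.refl L).smul_right (τ : ℂ)).exp_right).eq.symm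
  convert (hleft.mul_const a).mul (hasDerivAt_exp_ofReal_smul L τ) using 1
  · rfl
  rw [hcomm]
  noncomm_ring

theorem exists_norm_exp_ofReal_smul_le (L : A) (T : ℝ) :
    ∃ M, 0 ≤ M ∧ ∀ s ∈ Icc 0 T, ‖exp ((s : ℂ) • L)‖ ≤ M := by
  obtain ⟨M, hM⟩ :=
    isCompact_Icc.exists_bound_of_continuousOn (continuous_exp_ofReal_smul L).continuousOn
  exact ⟨max M 0, le_max_right _ _, fun s hs => (hM s hs).trans (le_max_left _ _)⟩

theorem continuous_exp_sub_smul_mul_mul_exp_smul (L a : A) (t : ℝ) :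
    Continuous fun r : ℝ => exp (((t - r : ℝ) : ℂ) • L) * a * exp ((r : ℂ) • L) :=
  continuous_iff_continuousAt.2 fun τ =>
    (hasDerivAt_exp_sub_smul_mul_mul_exp_smul L a t τ).continuousAt

end ExpFlow

theorem stmt7_general {A : Type*} [NormedRing A] [NormedAlgebra ℂ A] [CompleteSpace A]
    (L α u₀ : A) (T : ℝ) (hT : 0 < T) (n : ℕ) :
    ∃ C : ℝ, 0 ≤ C ∧ ∀ ω : ℝ, 1 ≤ ω → ∀ t ∈ Set.Icc (0:ℝ) T,
      ‖((Complex.I * ω) ^ n)⁻¹ •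
        ∫ τ in (0:ℝ)..t, Complex.exp (Complex.I * ω * τ) •
          (NormedSpace.exp (((t - τ : ℝ) : ℂ) • L) * adL L n α *
            NormedSpace.exp ((τ : ℂ) • L) * u₀)‖
      ≤ C * (ω ^ (n + 1))⁻¹ := by
  obtain ⟨M, hM₀, hM⟩ := exists_norm_exp_ofReal_smul_le L T
  set C₀ := M * ‖adL L n α‖ * M * ‖u₀‖
  set C₁ := M * ‖adL L (n + 1) α‖ * M * ‖u₀‖
  refine ⟨2 * C₀ + T * C₁, by positivity, ?_⟩
  rintro ω hω t ⟨ht₀, htT⟩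
  have hω₀ : 0 < ω := one_pos.trans_le hω
  have hosc := norm_integral_cexp_smul_le hω₀.ne' ht₀
    (fun τ _ => (hasDerivAt_exp_sub_smul_mul_mul_exp_smul L (adL L n α) t τ).mul_const u₀)
    (((continuous_exp_sub_smul_mul_mul_exp_smul L (adL L (n + 1) α) t).neg.mul
      continuous_const).intervalIntegrable 0 t)
    (fun τ hτ => norm_exp_sub_smul_mul_mul_exp_smul_mul_le hM₀ hM htT hτ _ _)
    (fun τ hτ => by
      rw [neg_mul, norm_neg]
      exact norm_exp_sub_smul_mul_mul_exp_smul_mul_le hM₀ hM htT hτ _ _)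
  rw [norm_smul, norm_inv, norm_pow, norm_mul, Complex.norm_I, one_mul, Complex.norm_real,
    Real.norm_of_nonneg hω₀.le]
  calc (ω ^ n)⁻¹ * _ ≤ (ω ^ n)⁻¹ * ((2 * C₀ + (t - 0) * C₁) / |ω|) :=
        mul_le_mul_of_nonneg_left hosc (by positivity)
    _ ≤ (ω ^ n)⁻¹ * ((2 * C₀ + T * C₁) / ω) := by
        rw [sub_zero, abs_of_pos hω₀]
        gcongr
    _ = (2 * C₀ + T * C₁) * (ω ^ (n + 1))⁻¹ := by
        rw [pow_succ, mul_inv]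
        ring

/-- Fix `t* > 0` and `n ≥ 1`. There exists a constant `C ≥ 0`, independent of
`ω`, such that for all real `ω ≥ 1` and all `t ∈ [0,t*]`:
`‖(iω)^{−n}·∫₀ᵗ e^{iωτ}·exp((t−τ)L)·ad_L^n(α)·exp(τL)·u₀ dτ‖ ≤ C·ω^{−(n+1)}`. -/
theorem stmt7 {A : Type*} [NormedRing A] [NormedAlgebra ℂ A] [CompleteSpace A]
    (L α u₀ : A) (T : ℝ) (hT : 0 < T) (n : ℕ) (hn : 1 ≤ n) :
    ∃ C : ℝ, 0 ≤ C ∧ ∀ ω : ℝ, 1 ≤ ω → ∀ t ∈ Set.Icc (0:ℝ) T,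
      ‖((Complex.I * ω) ^ n)⁻¹ •
        ∫ τ in (0:ℝ)..t, Complex.exp (Complex.I * ω * τ) •
          (NormedSpace.exp (((t - τ : ℝ) : ℂ) • L) * adL L n α *
            NormedSpace.exp ((τ : ℂ) • L) * u₀)‖
      ≤ C * (ω ^ (n + 1))⁻¹ :=
  stmt7_general L α u₀ T hT n
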